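/- arXiv:2601.07567 — 7 statements merged into one kernel-verified Lean document; each statement's English description precedes it below -/
import Mathlib

section
/- The rank function defined from a rank-metric code C ≤ F_q^{n×m} by ρ_C(V) = (dim C − dim C(V^⊥))/m, where C(W) = {X ∈ C : colsp(X) ≤ W}, satisfies boundedness: 0 ≤ ρ_C(V) ≤ dim V for all subspaces V ≤ F_q^n. -/
open Module

variable {K : Type} [Field K] [Fintype K] {n m : ℕ}

/-- Orthogonal complement w.r.t. the standard symmetric bilinear form on `Fin n → K`. -/
def stdPerp (V : Submodule K (Fin n → K)) : Submodule K (Fin n → K) where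
  carrier := {w | ∀ v ∈ V, ∑ i, v i * w i = 0}
  zero_mem' := by intro v hv; simp
  add_mem' := by
    intro a b ha hb v hv
    simp [Pi.add_apply, mul_add, Finset.sum_add_distrib, ha v hv, hb v hv]
  smul_mem' := by
    intro c a ha v hv
    simp only [Pi.smul_apply, smul_eq_mul, mul_left_comm, ← Finset.mul_sum, ha v hv, mul_zero]

/-- Matrices all of whose columns lie in `V` (i.e. with column space contained in `V`). -/
def colIn (m : ℕ) (V : Submodule K (Fin n → K)) : Submodule K (Matrix (Fin n) (Fin m) K) where
  carrier := {X | ∀ j, (fun i => X i j) ∈ V}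
  zero_mem' := by
    intro j
    show (fun i => (0 : Matrix (Fin n) (Fin m) K) i j) ∈ V
    simp only [Matrix.zero_apply]
    exact V.zero_mem
  add_mem' := by
    intro a b ha hb j
    exact V.add_mem (ha j) (hb j)
  smul_mem' := by
    intro c X hX j
    exact V.smul_mem c (hX j)

/-- The shortened subcode `C(W) = {X ∈ C : colsp X ≤ W}`. -/
def shortened (C : Submodule K (Matrix (Fin n) (Fin m) K))
    (W : Submodule K (Fin n → K)) : Submodule K (Matrix (Fin n) (Fin m) K) :=
  C ⊓ colIn m W

/-- The `q`-polymatroid rank function `ρ_C(V) = (dim C − dim C(V^⊥))/m`. -/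
noncomputable def rhoCode (C : Submodule K (Matrix (Fin n) (Fin m) K))
    (V : Submodule K (Fin n → K)) : ℚ :=
  ((finrank K C : ℚ) - (finrank K (shortened C (stdPerp V)) : ℚ)) / m

/-- The trace-dual code `C^⊥ = {X : tr(X Yᵀ) = 0 for all Y ∈ C}`. -/
def dualCode (C : Submodule K (Matrix (Fin n) (Fin m) K)) :
    Submodule K (Matrix (Fin n) (Fin m) K) where
  carrier := {X | ∀ Y ∈ C, ∑ i, ∑ j, X i j * Y i j = 0}
  zero_mem' := by intro Y hY; simp
  add_mem' := by
    intro a b ha hb Y hY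
    simp [Matrix.add_apply, add_mul, Finset.sum_add_distrib, ha Y hY, hb Y hY]
  smul_mem' := by
    intro c X hX Y hY
    simp only [Matrix.smul_apply, smul_eq_mul, mul_assoc, ← Finset.mul_sum, hX Y hY, mul_zero]

theorem Submodule.finrank_add_le_finrank_inf_add_finrank {F E : Type*} [DivisionRing F]
    [AddCommGroup E] [Module F E] [FiniteDimensional F E] (s t : Submodule F E) :
    finrank F s + finrank F t ≤ finrank F ↥(s ⊓ t) + finrank F E := by
  rw [← Submodule.finrank_sup_add_finrank_inf_eq, add_comm]
  exact Nat.add_le_add_left (Submodule.finrank_le _) _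

section

variable {F : Type} [Field F]

theorem stdPerp_eq_comap_dualAnnihilator (V : Submodule F (Fin n → F)) :
    stdPerp V = V.dualAnnihilator.comap (dotProductEquiv F (Fin n)).toLinearMap := by
  ext w
  simp only [Submodule.mem_comap, Submodule.mem_dualAnnihilator, LinearEquiv.coe_coe,
    dotProductEquiv_apply_apply, dotProduct, mul_comm (w _)]
  rfl

theorem finrank_add_finrank_stdPerp (V : Submodule F (Fin n → F)) :
    finrank F V + finrank F (stdPerp V) = n := by
  rw [stdPerp_eq_comap_dualAnnihilator, Submodule.comap_equiv_eq_map_symm,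
    LinearEquiv.finrank_map_eq, Subspace.finrank_add_finrank_dualAnnihilator_eq,
    Module.finrank_fin_fun]

def colInEquiv (W : Submodule F (Fin n → F)) : colIn m W ≃ₗ[F] (Fin m → W) where
  toFun X j := ⟨fun i => X.1 i j, X.2 j⟩
  invFun f := ⟨fun i j => (f j).1 i, fun j => (f j).2⟩
  left_inv _ := rfl
  right_inv _ := rfl
  map_add' _ _ := rfl
  map_smul' _ _ := rfl

theorem finrank_colIn (W : Submodule F (Fin n → F)) :
    finrank F (colIn m W) = m * finrank F W := by
  rw [(colInEquiv W).finrank_eq, Module.finrank_pi_fintype, Finset.sum_const,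
    Finset.card_univ, Fintype.card_fin, smul_eq_mul]

/-- `colIn m V^⊥` has codimension `m · (n - dim V^⊥) = m · dim V`, so intersecting `C` with it
lowers the dimension by at most `m · dim V`. -/
theorem finrank_le_finrank_shortened_stdPerp_add (C : Submodule F (Matrix (Fin n) (Fin m) F))
    (V : Submodule F (Fin n → F)) :
    finrank F C ≤ finrank F (shortened C (stdPerp V)) + m * finrank F V := by
  have hmod := C.finrank_add_le_finrank_inf_add_finrank (colIn m (stdPerp V))
  have hperp := finrank_add_finrank_stdPerp V
  rw [finrank_colIn, Module.finrank_matrix, Module.finrank_self, Fintype.card_fin,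
    Fintype.card_fin, mul_one] at hmod
  rw [shortened]
  nlinarith

end

theorem rhoCode_bounds_general
    (C : Submodule K (Matrix (Fin n) (Fin m) K)) (V : Submodule K (Fin n → K)) :
    0 ≤ rhoCode C V ∧ rhoCode C V ≤ (finrank K V : ℚ) := by
  have hsub : (finrank K (shortened C (stdPerp V)) : ℚ) ≤ finrank K C := by
    exact_mod_cast Submodule.finrank_mono inf_le_left
  have hcodim : (finrank K C : ℚ) ≤ finrank K (shortened C (stdPerp V)) + finrank K V * m := by
    rw [mul_comm]
    exact_mod_cast finrank_le_finrank_shortened_stdPerp_add C V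
  refine ⟨div_nonneg (sub_nonneg.mpr hsub) m.cast_nonneg, ?_⟩
  exact div_le_of_le_mul₀ m.cast_nonneg (Nat.cast_nonneg _) (by linarith)

/-- boundedness of the rank function of a rank-metric code:
`0 ≤ ρ_C(V) ≤ dim V`. -/
theorem rhoCode_bounds (hm : 0 < m)
    (C : Submodule K (Matrix (Fin n) (Fin m) K)) (V : Submodule K (Fin n → K)) :
    0 ≤ rhoCode C V ∧ rhoCode C V ≤ (finrank K V : ℚ) :=
  rhoCode_bounds_general C V
end

section
/- Let C ≤ F_q^{n×m} be a rank-metric code and V_1,…,V_ℓ ≤ F_q^n. With Z_V the random variable on C/C(V^⊥) induced by the uniform distribution on C, the joint entropy H(Z_{V_1},…,Z_{V_ℓ}) equals H(Z_{V_1+⋯+V_ℓ}). -/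
open Module

variable {K : Type} [Field K] [Fintype K] {n m : ℕ}

/-- Shannon entropy of the push-forward of the uniform distribution on the code `C`
along a map `f` (mass of `y` is `#f⁻¹(y)/#C`).  Applied to a tuple-valued map this is
exactly the joint entropy of the component random variables. -/
noncomputable def entropyMap (C : Submodule K (Matrix (Fin n) (Fin m) K))
    {α : Type} (f : C → α) : ℝ :=
  ∑ᶠ y : α, Real.negMulLog ((Nat.card {x : C // f x = y} : ℝ) / (Nat.card C : ℝ))

/-! The joint variable `(Z_{V_1}, …, Z_{V_ℓ})` is the quotient map of `C` modulo the intersection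
of the subcodes `C(V_i^⊥)`, followed by an injection into the product of the quotients. Since
`(⨆ i, V i)^⊥ = ⨅ i, (V i)^⊥` and shortening commutes with intersections, that intersection is
`C((V_1 + ⋯ + V_ℓ)^⊥)`, and entropy is invariant under injective relabelling of outcomes. -/

theorem entropyMap_comp_of_injective {K : Type} [Field K]
    (C : Submodule K (Matrix (Fin n) (Fin m) K)) {α β : Type} (f : C → α) {e : α → β}
    (he : Function.Injective e) :
    entropyMap C (e ∘ f) = entropyMap C f := by
  set F := fun z : β ↦ Real.negMulLog ((Nat.card {x : C // e (f x) = z} : ℝ) / Nat.card C)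
  have hsupp : Function.support F ⊆ Set.range e := by
    intro z hz
    by_contra hz'
    have : IsEmpty {x : C // e (f x) = z} := ⟨fun x ↦ hz' ⟨f x, x.2⟩⟩
    simp [F] at hz
  calc ∑ᶠ z, F z = ∑ᶠ z ∈ Set.range e, F z := by
        rw [← finsum_mem_univ, ← finsum_mem_inter_support,
          ← finsum_mem_inter_support F (Set.range e), Set.univ_inter,
          Set.inter_eq_right.mpr hsupp]
    _ = ∑ᶠ y, F (e y) := finsum_mem_range he
    _ = entropyMap C f := by
        simp only [F, he.eq_iff]
        rfl

theorem Submodule.exists_injective_comp_mkQ_iInf {R M ι : Type*} [Ring R] [AddCommGroup M]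
    [Module R M] (p : ι → Submodule R M) :
    ∃ e : (M ⧸ ⨅ i, p i) → ((i : ι) → M ⧸ p i),
      Function.Injective e ∧ (fun x i ↦ (p i).mkQ x) = e ∘ (⨅ i, p i).mkQ := by
  have hker : LinearMap.ker (LinearMap.pi fun i ↦ (p i).mkQ) = ⨅ i, p i := by
    simp [LinearMap.ker_pi]
  refine ⟨(⨅ i, p i).liftQ _ hker.ge, ?_, rfl⟩
  rw [← LinearMap.ker_eq_bot]
  exact Submodule.ker_liftQ_eq_bot _ _ _ hker.le

theorem stdPerp_iSup {K : Type} [Field K] {ι : Type} (V : ι → Submodule K (Fin n → K)) :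
    stdPerp (⨆ i, V i) = ⨅ i, stdPerp (V i) := by
  ext w
  simp only [Submodule.mem_iInf]
  refine ⟨fun h i v hv ↦ h v (Submodule.mem_iSup_of_mem i hv), fun h v hv ↦ ?_⟩
  induction hv using Submodule.iSup_induction' with
  | mem i v hv => exact h i v hv
  | zero => simp
  | add v v' _ _ hv hv' => simp [add_mul, Finset.sum_add_distrib, hv, hv']

theorem colIn_iInf {K : Type} [Field K] {ι : Type} (W : ι → Submodule K (Fin n → K)) :
    colIn m (⨅ i, W i) = ⨅ i, colIn m (W i) := by
  ext X
  simp only [Submodule.mem_iInf]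
  exact ⟨fun h i j ↦ (Submodule.mem_iInf _).mp (h j) i,
    fun h j ↦ (Submodule.mem_iInf _).mpr fun i ↦ h i j⟩

theorem comap_subtype_shortened {K : Type} [Field K]
    (C : Submodule K (Matrix (Fin n) (Fin m) K)) (W : Submodule K (Fin n → K)) :
    (shortened C W).comap C.subtype = (colIn m W).comap C.subtype := by
  rw [shortened, Submodule.comap_inf, Submodule.comap_subtype_self, top_inf_eq]

theorem comap_subtype_shortened_stdPerp_iSup {K : Type} [Field K] {ι : Type}
    (C : Submodule K (Matrix (Fin n) (Fin m) K)) (V : ι → Submodule K (Fin n → K)) :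
    (shortened C (stdPerp (⨆ i, V i))).comap C.subtype =
      ⨅ i, (shortened C (stdPerp (V i))).comap C.subtype := by
  simp only [comap_subtype_shortened, stdPerp_iSup, colIn_iInf, Submodule.comap_iInf]

theorem joint_entropy_eq_entropy_sup_general {ℓ : ℕ}
    (C : Submodule K (Matrix (Fin n) (Fin m) K)) (V : Fin ℓ → Submodule K (Fin n → K)) :
    entropyMap C
        (fun x i => ((shortened C (stdPerp (V i))).comap C.subtype).mkQ x)
      = entropyMap C (⇑((shortened C (stdPerp (⨆ i, V i))).comap C.subtype).mkQ) := by
  obtain ⟨e, he, hjoint⟩ := Submodule.exists_injective_comp_mkQ_iInf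
    fun i ↦ (shortened C (stdPerp (V i))).comap C.subtype
  rw [hjoint, entropyMap_comp_of_injective C _ he, comap_subtype_shortened_stdPerp_iSup]

/-- the joint entropy `H(Z_{V_1},…,Z_{V_ℓ})` equals `H(Z_{V_1+⋯+V_ℓ})`. -/
theorem joint_entropy_eq_entropy_sup (hm : 0 < m) {ℓ : ℕ}
    (C : Submodule K (Matrix (Fin n) (Fin m) K)) (V : Fin ℓ → Submodule K (Fin n → K)) :
    entropyMap C
        (fun x i => ((shortened C (stdPerp (V i))).comap C.subtype).mkQ x)
      = entropyMap C (⇑((shortened C (stdPerp (⨆ i, V i))).comap C.subtype).mkQ) :=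
  joint_entropy_eq_entropy_sup_general C V
end

section
/- Let M = (E, ρ) be a q-polymatroid and P_0 ≤ E. If W ≤ W' ≤ E and ρ(P_0 + W') − ρ(W') = ρ(P_0), then ρ(P_0 + W) − ρ(W) = ρ(P_0). (Privacy spaces form an anti-monotone family.) -/
open Module

variable {K E : Type} [Field K] [Fintype K] [AddCommGroup E] [Module K E]
  [FiniteDimensional K E]

/-- in a `q`-polymatroid, if `ρ(P₀ + W') − ρ(W') = ρ(P₀)` and `W ≤ W'`, then
`ρ(P₀ + W) − ρ(W) = ρ(P₀)` (privacy spaces form an anti-monotone family). -/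
theorem conditional_rank_full_antimono
    (ρ : Submodule K E → ℚ)
    (hbdd : ∀ V : Submodule K E, 0 ≤ ρ V ∧ ρ V ≤ (finrank K V : ℚ))
    (hmono : ∀ V W : Submodule K E, V ≤ W → ρ V ≤ ρ W)
    (hsubmod : ∀ V W : Submodule K E, ρ (V ⊔ W) + ρ (V ⊓ W) ≤ ρ V + ρ W)
    (P₀ : Submodule K E)
    (W W' : Submodule K E) (hWW' : W ≤ W')
    (h : ρ (P₀ ⊔ W') - ρ W' = ρ P₀) :
    ρ (P₀ ⊔ W) - ρ W = ρ P₀ := by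
  have hle : ρ (P₀ ⊔ W) - ρ W ≤ ρ P₀ := by
    have h1 := hsubmod P₀ W
    have h2 := (hbdd (P₀ ⊓ W)).1
    linarith
  have hge : ρ P₀ ≤ ρ (P₀ ⊔ W) - ρ W := by
    have h1 := hsubmod (P₀ ⊔ W) W'
    have heq : P₀ ⊔ W ⊔ W' = P₀ ⊔ W' := by
      rw [sup_assoc, sup_eq_right.mpr hWW']
    have h2 : ρ W ≤ ρ ((P₀ ⊔ W) ⊓ W') :=
      hmono _ _ (le_inf (le_sup_right) hWW')
    rw [heq] at h1
    linarith
  linarith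
end

section
/- The dual rank function ρ*(V) = dim V − ρ(E) + ρ(V^⊥) of a q-polymatroid (E, ρ) is itself a q-polymatroid rank function: it satisfies 0 ≤ ρ*(V) ≤ dim V, is monotone, and is submodular. -/
open Module

variable {K E : Type} [Field K] [Fintype K] [AddCommGroup E] [Module K E]
  [FiniteDimensional K E]

/-- The dual rank function `ρ*(V) = dim V − ρ(E) + ρ(V^⊥)`. -/
noncomputable def dualRank (perp : Submodule K E → Submodule K E)
    (ρ : Submodule K E → ℚ) : Submodule K E → ℚ :=
  fun V => (finrank K V : ℚ) - ρ (⊤ : Submodule K E) + ρ (perp V)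

theorem ρ_step
    (ρ : Submodule K E → ℚ)
    (hbdd : ∀ V : Submodule K E, 0 ≤ ρ V ∧ ρ V ≤ (finrank K V : ℚ))
    (hsubmod : ∀ V W : Submodule K E, ρ (V ⊔ W) + ρ (V ⊓ W) ≤ ρ V + ρ W)
    (A B : Submodule K E) (hAB : A ≤ B) :
    ρ B ≤ ρ A + ((finrank K B : ℚ) - (finrank K A : ℚ)) := by
  obtain ⟨C, hC⟩ := Submodule.exists_isCompl A
  set W := C ⊓ B with hW
  have hsup : A ⊔ W = B := by
    rw [hW, ← sup_inf_assoc_of_le _ hAB, hC.sup_eq_top, top_inf_eq]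
  have hinf : A ⊓ W = ⊥ :=
    le_bot_iff.mp (le_trans (inf_le_inf_left _ inf_le_left) hC.inf_eq_bot.le)
  have hdim : finrank K A + finrank K W = finrank K B := by
    have := Submodule.finrank_sup_add_finrank_inf_eq A W
    rw [hsup, hinf, finrank_bot, add_zero] at this
    omega
  have hdimQ : (finrank K A : ℚ) + (finrank K W : ℚ) = (finrank K B : ℚ) := by
    exact_mod_cast hdim
  have h1 := hsubmod A W
  rw [hsup, hinf] at h1
  have h2 := (hbdd (⊥ : Submodule K E)).1
  have h3 := (hbdd W).2
  linarith

/-- the dual rank function of a `q`-polymatroid is again a `q`-polymatroid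
rank function: bounded, monotone and submodular. -/
theorem dualRank_is_qPolymatroid
    (perp : Submodule K E → Submodule K E)
    (hperp_perp : ∀ V : Submodule K E, perp (perp V) = V)
    (hperp_dim : ∀ V : Submodule K E, finrank K V + finrank K (perp V) = finrank K E)
    (hperp_sup : ∀ V W : Submodule K E, perp (V ⊔ W) = perp V ⊓ perp W)
    (hperp_inf : ∀ V W : Submodule K E, perp (V ⊓ W) = perp V ⊔ perp W)
    (ρ : Submodule K E → ℚ)
    (hbdd : ∀ V : Submodule K E, 0 ≤ ρ V ∧ ρ V ≤ (finrank K V : ℚ))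
    (hmono : ∀ V W : Submodule K E, V ≤ W → ρ V ≤ ρ W)
    (hsubmod : ∀ V W : Submodule K E, ρ (V ⊔ W) + ρ (V ⊓ W) ≤ ρ V + ρ W) :
    (∀ V : Submodule K E, 0 ≤ dualRank perp ρ V ∧ dualRank perp ρ V ≤ (finrank K V : ℚ))
    ∧ (∀ V W : Submodule K E, V ≤ W → dualRank perp ρ V ≤ dualRank perp ρ W)
    ∧ (∀ V W : Submodule K E,
        dualRank perp ρ (V ⊔ W) + dualRank perp ρ (V ⊓ W)
          ≤ dualRank perp ρ V + dualRank perp ρ W) := by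
  have hdimQ : ∀ V : Submodule K E,
      (finrank K V : ℚ) + (finrank K (perp V) : ℚ) = (finrank K E : ℚ) := by
    intro V; exact_mod_cast hperp_dim V
  have htop : finrank K (⊤ : Submodule K E) = finrank K E := finrank_top K E
  refine ⟨?_, ?_, ?_⟩
  · intro V
    constructor
    · have h := ρ_step ρ hbdd hsubmod (perp V) ⊤ le_top
      have := hdimQ V
      simp only [dualRank, htop]
      push_cast [htop] at h ⊢
      linarith
    · have h := hmono (perp V) ⊤ le_top
      simp only [dualRank]
      linarith
  · intro V W hVW
    have hle : perp W ≤ perp V := by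
      have := hperp_sup V W
      rw [sup_eq_right.mpr hVW] at this
      rw [this]; exact inf_le_left
    have h := ρ_step ρ hbdd hsubmod (perp W) (perp V) hle
    have h1 := hdimQ V
    have h2 := hdimQ W
    simp only [dualRank]
    linarith
  · intro V W
    have h := hsubmod (perp V) (perp W)
    rw [← hperp_sup, ← hperp_inf] at h
    have hdim := Submodule.finrank_sup_add_finrank_inf_eq V W
    have hdimQ2 := congrArg (fun n : ℕ => (n : ℚ)) hdim
    push_cast at hdimQ2
    simp only [dualRank]
    linarith
end

section
/- Let S = S_{P_0,P}(M) be a generalized q-polymatroid port, V ∈ Γ (a reconstructing space) and W ∈ A (a privacy space) with W ≤ V, and Y ≤ P with W ⊕ Y = V. Then ρ(P_0) ≤ ρ(Y); consequently the information ratio σ(S) = max_{1-dim p ≤ P} ρ(p) / ρ(P_0) satisfies σ(S) ≥ 1/g(S), where g(S) is the minimum of dim(V/W) over pairs W < V with V ∈ Γ, W ∈ A. -/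
/-!
For `W ⊕ Y = V`, a privacy space `W` adds all of `ρ(P₀)` when `P₀` is joined to it, while the
reconstructing space `V` adds nothing; monotonicity and subadditivity then give
`ρ W + ρ P₀ = ρ(P₀ ⊔ W) ≤ ρ(P₀ ⊔ V) = ρ V ≤ ρ W + ρ Y`, so `ρ P₀ ≤ ρ Y`. Spanning `Y` by a basis,
subadditivity bounds `ρ Y` by `dim Y = dim V - dim W` one-dimensional values, each at most `σmax`.
-/

open Module

section Lattice

variable {L : Type*} [Lattice L] {ρ : L → ℚ}

lemma sup_le_add_of_submodular (hsubmod : ∀ a b, ρ (a ⊔ b) + ρ (a ⊓ b) ≤ ρ a + ρ b)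
    (hnonneg : ∀ a, 0 ≤ ρ a) (a b : L) : ρ (a ⊔ b) ≤ ρ a + ρ b := by
  linarith [hsubmod a b, hnonneg (a ⊓ b)]

lemma le_of_reconstructing_of_private (hmono : Monotone ρ)
    (hsub : ∀ a b, ρ (a ⊔ b) ≤ ρ a + ρ b) {s v w y : L}
    (hv : ρ (s ⊔ v) = ρ v) (hw : ρ (s ⊔ w) - ρ w = ρ s) (hwy : w ⊔ y = v) : ρ s ≤ ρ y := by
  have hwv : w ≤ v := hwy ▸ le_sup_left
  linarith [hmono (sup_le_sup_left hwv s), hwy ▸ hsub w y]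

end Lattice

section Submodule

variable {k M : Type*} [DivisionRing k] [AddCommGroup M] [Module k M] {ρ : Submodule k M → ℚ}

lemma Module.Basis.span_range_coe {Y : Submodule k M} {ι : Type*} (b : Basis ι k Y) :
    Submodule.span k (Set.range fun i => (b i : M)) = Y := by
  rw [Set.range_comp' Subtype.val b, ← Y.coe_subtype, Submodule.span_image, b.span_eq,
    Submodule.map_top, Submodule.range_subtype]

lemma le_finrank_mul_of_forall_finrank_eq_one (hbot : ρ ⊥ = 0)
    (hsub : ∀ V W, ρ (V ⊔ W) ≤ ρ V + ρ W) {c : ℚ} (Y : Submodule k M) [FiniteDimensional k Y]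
    (hc : ∀ p ≤ Y, finrank k p = 1 → ρ p ≤ c) : ρ Y ≤ finrank k Y * c := by
  let b := finBasis k Y
  have hY : Y = Finset.univ.sup fun i => k ∙ (b i : M) := by
    rw [Finset.sup_univ_eq_iSup, ← Submodule.span_range_eq_iSup, b.span_range_coe]
  calc ρ Y = ρ (Finset.univ.sup fun i => k ∙ (b i : M)) := congrArg ρ hY
    _ ≤ ∑ i, ρ (k ∙ (b i : M)) := Finset.apply_sup_le_sum hbot (hsub _ _) _
    _ ≤ ∑ _ : Fin (finrank k Y), c := by
      gcongr with i
      exact hc _ ((Submodule.span_singleton_le_iff_mem _ _).2 (b i).2)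
        (finrank_span_singleton (by simpa using b.ne_zero i))
    _ = finrank k Y * c := by simp

lemma finrank_eq_sub_of_inf_eq_bot_of_sup_eq [FiniteDimensional k M] {V W Y : Submodule k M}
    (hinf : W ⊓ Y = ⊥) (hsup : W ⊔ Y = V) :
    (finrank k Y : ℚ) = finrank k V - finrank k W := by
  have := Submodule.finrank_sup_add_finrank_inf_eq W Y
  rw [hsup, hinf, finrank_bot] at this
  rw [eq_sub_iff_add_eq', ← Nat.cast_add, ← this, add_zero]

end Submodule

variable {K E : Type} [Field K] [Fintype K] [AddCommGroup E] [Module K E]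
  [FiniteDimensional K E]

theorem port_secret_le_share_and_information_ratio_general
    (ρ : Submodule K E → ℚ)
    (hbdd : ∀ V : Submodule K E, 0 ≤ ρ V ∧ ρ V ≤ (finrank K V : ℚ))
    (hmono : ∀ V W : Submodule K E, V ≤ W → ρ V ≤ ρ W)
    (hsubmod : ∀ V W : Submodule K E, ρ (V ⊔ W) + ρ (V ⊓ W) ≤ ρ V + ρ W)
    (P₀ P : Submodule K E)
    (hP₀ : 0 < ρ P₀)
    -- `σmax` is the maximum of `ρ(p)` over one-dimensional subspaces `p ≤ P`
    (σmax : ℚ)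
    (hub : ∀ p : Submodule K E, p ≤ P → finrank K p = 1 → ρ p ≤ σmax) :
    (∀ V W Y : Submodule K E, V ≤ P → W ≤ P → Y ≤ P →
        ρ (P₀ ⊔ V) = ρ V →                 -- V ∈ Γ
        ρ (P₀ ⊔ W) - ρ W = ρ P₀ →          -- W ∈ A
        W ⊓ Y = ⊥ → W ⊔ Y = V →
        ρ P₀ ≤ ρ Y)
    ∧ (∀ V W : Submodule K E, V ≤ P → W ≤ P →
        ρ (P₀ ⊔ V) = ρ V →                 -- V ∈ Γ
        ρ (P₀ ⊔ W) - ρ W = ρ P₀ →          -- W ∈ A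
        W < V →
        1 / ((finrank K V : ℚ) - (finrank K W : ℚ)) ≤ σmax / ρ P₀) := by
  have hsub := sup_le_add_of_submodular hsubmod fun V => (hbdd V).1
  have hbot : ρ ⊥ = 0 := le_antisymm (by simpa using (hbdd ⊥).2) (hbdd ⊥).1
  have secret_le_share : ∀ V W Y : Submodule K E, ρ (P₀ ⊔ V) = ρ V →
      ρ (P₀ ⊔ W) - ρ W = ρ P₀ → W ⊔ Y = V → ρ P₀ ≤ ρ Y := fun _ _ _ =>
    le_of_reconstructing_of_private (fun _ _ => hmono _ _) hsub
  refine ⟨fun V W Y _ _ _ hV hW _ hsup => secret_le_share V W Y hV hW hsup, ?_⟩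
  intro V W hVP _ hV hW hlt
  obtain ⟨Y, hinf, hsup⟩ := IsModularLattice.exists_inf_eq_and_sup_eq bot_le hlt.le
  have hdim := finrank_eq_sub_of_inf_eq_bot_of_sup_eq hinf hsup
  have hdim_pos : (0 : ℚ) < finrank K V - finrank K W := by
    rw [sub_pos, Nat.cast_lt]; exact Submodule.finrank_lt_finrank_of_lt hlt
  have hYP : Y ≤ P := (hsup ▸ le_sup_right : Y ≤ V).trans hVP
  rw [div_le_div_iff₀ hdim_pos hP₀, one_mul, ← hdim]
  calc ρ P₀ ≤ ρ Y := secret_le_share V W Y hV hW hsup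
    _ ≤ finrank K Y * σmax :=
      le_finrank_mul_of_forall_finrank_eq_one hbot hsub Y fun p hp => hub p (hp.trans hYP)
    _ = σmax * finrank K Y := mul_comm _ _

/-- for a generalized `q`-polymatroid port with `V ∈ Γ`, `W ∈ A`, `W ⊕ Y = V`,
one has `ρ(P₀) ≤ ρ(Y)`; consequently the information ratio `σ(S) = max_p ρ(p)/ρ(P₀)`
satisfies `σ(S) ≥ 1/g(S)`, i.e. `1/dim(V/W) ≤ σ(S)` for every admissible pair `W < V`. -/
theorem port_secret_le_share_and_information_ratio
    (ρ : Submodule K E → ℚ)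
    (hbdd : ∀ V : Submodule K E, 0 ≤ ρ V ∧ ρ V ≤ (finrank K V : ℚ))
    (hmono : ∀ V W : Submodule K E, V ≤ W → ρ V ≤ ρ W)
    (hsubmod : ∀ V W : Submodule K E, ρ (V ⊔ W) + ρ (V ⊓ W) ≤ ρ V + ρ W)
    (P₀ P : Submodule K E) (hdisj : P₀ ⊓ P = ⊥) (hspan : P₀ ⊔ P = ⊤)
    (hP₀ : 0 < ρ P₀)
    -- `σmax` is the maximum of `ρ(p)` over one-dimensional subspaces `p ≤ P`
    (σmax : ℚ)
    (hub : ∀ p : Submodule K E, p ≤ P → finrank K p = 1 → ρ p ≤ σmax)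
    (hatt : ∃ p : Submodule K E, p ≤ P ∧ finrank K p = 1 ∧ ρ p = σmax) :
    (∀ V W Y : Submodule K E, V ≤ P → W ≤ P → Y ≤ P →
        ρ (P₀ ⊔ V) = ρ V →                 -- V ∈ Γ
        ρ (P₀ ⊔ W) - ρ W = ρ P₀ →          -- W ∈ A
        W ⊓ Y = ⊥ → W ⊔ Y = V →
        ρ P₀ ≤ ρ Y)
    ∧ (∀ V W : Submodule K E, V ≤ P → W ≤ P →
        ρ (P₀ ⊔ V) = ρ V →                 -- V ∈ Γ
        ρ (P₀ ⊔ W) - ρ W = ρ P₀ →          -- W ∈ A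
        W < V →
        1 / ((finrank K V : ℚ) - (finrank K W : ℚ)) ≤ σmax / ρ P₀) :=
  port_secret_le_share_and_information_ratio_general ρ hbdd hmono hsubmod P₀ P hP₀ σmax hub
end

section
/- Let S = S_{P_0,P}(M) be a perfect q-polymatroid port with ρ(P_0) = dim P_0 = 1. If W ≤ P and y is a 1-dimensional subspace of P with W ∈ A and y + W ∈ Γ, then ρ(y | W) = 1 and ρ(y | W + P_0) = 0. -/
open Module

variable {K E : Type} [Field K] [Fintype K] [AddCommGroup E] [Module K E]
  [FiniteDimensional K E]

/-- in a perfect `q`-polymatroid port with `ρ(P₀) = dim P₀ = 1`, if `W ∈ A`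
and `y + W ∈ Γ` for a one-dimensional `y ≤ P`, then `ρ(y|W) = 1` and `ρ(y|W+P₀) = 0`. -/
theorem perfect_port_augmentation
    (ρ : Submodule K E → ℚ)
    (hbdd : ∀ V : Submodule K E, 0 ≤ ρ V ∧ ρ V ≤ (finrank K V : ℚ))
    (hmono : ∀ V W : Submodule K E, V ≤ W → ρ V ≤ ρ W)
    (hsubmod : ∀ V W : Submodule K E, ρ (V ⊔ W) + ρ (V ⊓ W) ≤ ρ V + ρ W)
    (P₀ P : Submodule K E) (hdisj : P₀ ⊓ P = ⊥) (hspan : P₀ ⊔ P = ⊤)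
    (hdimP₀ : finrank K P₀ = 1) (hρP₀ : ρ P₀ = 1)
    (hperfect : ∀ V : Submodule K E, V ≤ P →
      ρ (P₀ ⊔ V) = ρ V ∨ ρ (P₀ ⊔ V) = ρ V + 1)
    (W y : Submodule K E) (hWP : W ≤ P) (hyP : y ≤ P) (hy : finrank K y = 1)
    (hWA : ρ (P₀ ⊔ W) = ρ W + 1)            -- W ∈ A
    (hyWΓ : ρ (P₀ ⊔ (y ⊔ W)) = ρ (y ⊔ W)) : -- y + W ∈ Γ
    ρ (y ⊔ W) = ρ W + 1 ∧ ρ (y ⊔ (W ⊔ P₀)) = ρ (W ⊔ P₀) := by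
  have hge : ρ W + 1 ≤ ρ (y ⊔ W) := by
    have h1 : ρ (P₀ ⊔ W) ≤ ρ (P₀ ⊔ (y ⊔ W)) :=
      hmono _ _ (sup_le_sup_left le_sup_right _)
    rw [hyWΓ] at h1; linarith [hWA]
  have hle : ρ (y ⊔ W) ≤ ρ W + 1 := by
    have h2 := hsubmod y W
    have h3 := (hbdd y).2
    have h4 := (hbdd (y ⊓ W)).1
    rw [hy] at h3
    push_cast at h3
    linarith
  have h5 : ρ (y ⊔ W) = ρ W + 1 := le_antisymm hle hge
  refine ⟨h5, ?_⟩
  have e1 : y ⊔ (W ⊔ P₀) = P₀ ⊔ (y ⊔ W) := by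
    rw [sup_comm y (W ⊔ P₀)]; ac_rfl
  have e2 : W ⊔ P₀ = P₀ ⊔ W := sup_comm _ _
  rw [e1, e2, hyWΓ, h5, hWA]
end

section
/- (q-Brickell–Davenport) Let S_{P_0,P}(M) be an ideal, perfect and connected q-polymatroid port with ρ(P_0) = dim P_0 = 1. Then the restriction M|_P is a q-matroid: ρ(V) is a nonnegative integer for every subspace V ≤ P. -/
open Module
set_option linter.unusedSectionVars false
namespace QBD
variable {K E : Type} [Field K] [Fintype K] [AddCommGroup E] [Module K E]
  [FiniteDimensional K E]
-- ## generic lattice/finrank toolkit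

lemma line_inf_bot {U : Submodule K E} {x : E} (hx : x ∉ U) :
    U ⊓ Submodule.span K {x} = ⊥ := by
  rw [eq_bot_iff]
  rintro y ⟨hyU, hyx⟩
  rcases Submodule.mem_span_singleton.mp hyx with ⟨a, rfl⟩
  rcases eq_or_ne a 0 with rfl | ha
  · simp
  · exact absurd (by simpa [ha] using U.smul_mem a⁻¹ hyU) hx

lemma finrank_sup_line {U : Submodule K E} {x : E} (hx : x ∉ U) :
    finrank K ↥(U ⊔ Submodule.span K {x}) = finrank K U + 1 := by
  have hx0 : x ≠ 0 := fun h => hx (h ▸ U.zero_mem)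
  have := Submodule.finrank_sup_add_finrank_inf_eq U (Submodule.span K {x})
  rw [line_inf_bot hx, finrank_span_singleton hx0] at this
  simpa using this

lemma span_le_iff {U : Submodule K E} {x : E} : Submodule.span K {x} ≤ U ↔ x ∈ U :=
  Submodule.span_singleton_le_iff_mem x U

/-- dimension of a sup with a 1-dimensional subspace not below. -/
lemma finrank_sup_line' {W g : Submodule K E} (hg1 : finrank K g = 1) (hgW : ¬ g ≤ W) :
    finrank K ↥(W ⊔ g) = finrank K W + 1 := by
  have hlt : g ⊓ W < g := lt_of_le_of_ne inf_le_left (fun h => hgW (h ▸ inf_le_right))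
  have h0 : finrank K ↥(g ⊓ W) = 0 := by
    have := Submodule.finrank_lt_finrank_of_lt hlt
    omega
  have hbot : g ⊓ W = ⊥ := Submodule.finrank_eq_zero.mp h0
  have := Submodule.finrank_sup_add_finrank_inf_eq W g
  rw [inf_comm] at this
  rw [hbot] at this
  simp at this
  omega

/-- A hyperplane of `G` containing `U` and avoiding `x`. -/
lemma exists_hyperplane_avoid {U G : Submodule K E} {x : E} (hUG : U ≤ G)
    (hxG : x ∈ G) (hxU : x ∉ U) :
    ∃ B, U ≤ B ∧ B ≤ G ∧ x ∉ B ∧ finrank K B + 1 = finrank K G := by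
  have hmeas : finrank K U < finrank K G :=
    Submodule.finrank_lt_finrank_of_lt (lt_of_le_of_ne hUG (fun h => hxU (h ▸ hxG)))
  -- strong induction on finrank G - finrank U
  generalize hn : finrank K G - finrank K U = n
  induction n using Nat.strong_induction_on generalizing U with
  | _ n IH =>
    rcases eq_or_lt_of_le (Nat.succ_le_of_lt hmeas) with heq | hlt
    · exact ⟨U, le_rfl, hUG, hxU, heq⟩
    · -- pick y ∈ G not in U ⊔ span x
      have hUx : U ⊔ Submodule.span K {x} < G := by
        rcases lt_or_eq_of_le (sup_le hUG (span_le_iff.mpr hxG)) with h | h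
        · exact h
        · exfalso
          have := finrank_sup_line hxU
          rw [h] at this
          omega
      obtain ⟨y, hyG, hy⟩ := SetLike.exists_of_lt hUx
      have hyU : y ∉ U := fun h => hy (Submodule.mem_sup_left h)
      have hxU' : x ∉ U ⊔ Submodule.span K {y} := by
        intro hmem
        rcases Submodule.mem_sup.mp hmem with ⟨u, hu, z, hz, hzu⟩
        rcases Submodule.mem_span_singleton.mp hz with ⟨a, rfl⟩
        rcases eq_or_ne a 0 with rfl | ha
        · simp at hzu; exact hxU (hzu ▸ hu)
        · apply hy
          have : y = a⁻¹ • (x - u) := by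
            have : a • y = x - u := by rw [← hzu]; abel
            rw [← this, smul_smul, inv_mul_cancel₀ ha, one_smul]
          rw [this]
          apply Submodule.smul_mem
          exact Submodule.sub_mem _ (Submodule.mem_sup_right (Submodule.mem_span_singleton_self x))
            (Submodule.mem_sup_left hu)
      have hUyG : U ⊔ Submodule.span K {y} ≤ G := sup_le hUG (span_le_iff.mpr hyG)
      have hfin : finrank K ↥(U ⊔ Submodule.span K {y}) = finrank K U + 1 :=
        finrank_sup_line hyU
      have hmeas' : finrank K ↥(U ⊔ Submodule.span K {y}) < finrank K G := by
        have h2 : U ⊔ Submodule.span K {y} ≤ U ⊔ Submodule.span K {x} ⊔ G := le_sup_of_le_right hUyG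
        omega
      obtain ⟨B, hB1, hB2, hB3, hB4⟩ := IH (finrank K G - (finrank K U + 1)) (by omega)
        hUyG hxU' hmeas' (by omega)
      exact ⟨B, le_trans le_sup_left hB1, hB2, hB3, hB4⟩

/-- modular bound: for A, Z ≤ T. -/
lemma modular_bound {A Z T : Submodule K E} (hA : A ≤ T) (hZ : Z ≤ T) :
    finrank K A + finrank K Z ≤ finrank K ↥(A ⊓ Z) + finrank K T := by
  have := Submodule.finrank_sup_add_finrank_inf_eq A Z
  have h2 : finrank K ↥(A ⊔ Z) ≤ finrank K T := Submodule.finrank_mono (sup_le hA hZ)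
  omega

structure Ctx (K E : Type) [Field K] [Fintype K] [AddCommGroup E] [Module K E]
    [FiniteDimensional K E] where
  r : Submodule K E → ℚ
  P₀ : Submodule K E
  P : Submodule K E
  bdd : ∀ V : Submodule K E, 0 ≤ r V ∧ r V ≤ (finrank K V : ℚ)
  mono : ∀ V W : Submodule K E, V ≤ W → r V ≤ r W
  submod : ∀ V W : Submodule K E, r (V ⊔ W) + r (V ⊓ W) ≤ r V + r W
  disj : P₀ ⊓ P = ⊥
  rP₀ : r P₀ = 1
  perfect : ∀ V : Submodule K E, V ≤ P → r (P₀ ⊔ V) = r V ∨ r (P₀ ⊔ V) = r V + 1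
  conn : ∀ p : Submodule K E, p ≤ P → finrank K p = 1 →
      ∃ G : Submodule K E, G ≤ P ∧ r (P₀ ⊔ G) = r G ∧
        (∀ G' : Submodule K E, G' < G → ¬ r (P₀ ⊔ G') = r G') ∧ p ≤ G
  ideal : ∀ p : Submodule K E, p ≤ P → finrank K p = 1 → r p = 1

namespace Ctx

variable (c : Ctx K E)

def lam (V : Submodule K E) : ℚ := c.r (c.P₀ ⊔ V) - c.r V

lemma lam01 {V : Submodule K E} (hV : V ≤ c.P) : c.lam V = 0 ∨ c.lam V = 1 := by
  rcases c.perfect V hV with h | h <;> [left; right] <;> simp [lam, h]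

lemma lam_nonneg (V : Submodule K E) : 0 ≤ c.lam V := by
  have := c.mono V (c.P₀ ⊔ V) le_sup_right
  simp only [lam]; linarith

lemma r_bot : c.r ⊥ = 0 := by
  have h := c.bdd (⊥ : Submodule K E)
  have h2 : (finrank K (⊥ : Submodule K E) : ℚ) = 0 := by simp
  rw [h2] at h
  linarith [h.1, h.2]

lemma r_nonneg (V : Submodule K E) : 0 ≤ c.r V := (c.bdd V).1

lemma lam_bot : c.lam ⊥ = 1 := by
  simp [lam, c.r_bot, c.rP₀]

/-- submodularity: increments decrease along larger bases. -/
lemma incr_mono {A A' : Submodule K E} (h : A ≤ A') (X : Submodule K E) :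
    c.r (A' ⊔ X) + c.r A ≤ c.r (A ⊔ X) + c.r A' := by
  have hs := c.submod (A ⊔ X) A'
  have hj : (A ⊔ X) ⊔ A' = A' ⊔ X := by
    rw [sup_right_comm, sup_eq_right.mpr h, sup_comm]
  have hm : A ≤ (A ⊔ X) ⊓ A' := le_inf le_sup_left h
  have := c.mono _ _ hm
  rw [hj] at hs
  linarith

/-- λ is monotone decreasing. -/
lemma lam_mono {V V' : Submodule K E} (h : V ≤ V') : c.lam V' ≤ c.lam V := by
  have := c.incr_mono h c.P₀
  simp only [lam]
  rw [sup_comm V c.P₀, sup_comm V' c.P₀] at this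
  linarith

/-- rank goes up by at most 1 when adding a line of P. -/
lemma incr_le_one (A : Submodule K E) {p : Submodule K E} (hp : p ≤ c.P)
    (hp1 : finrank K p = 1) : c.r (A ⊔ p) ≤ c.r A + 1 := by
  have hs := c.submod A p
  have h1 := c.ideal p hp hp1
  have h0 := c.r_nonneg (A ⊓ p)
  linarith

/-- Trigger lemma: an unqualified set that becomes qualified by adding a line
gains exactly rank one. -/
lemma trigger {V p : Submodule K E} (hp : p ≤ c.P) (hp1 : finrank K p = 1)
    (h1 : c.lam V = 1) (h0 : c.lam (V ⊔ p) = 0) : c.r (V ⊔ p) = c.r V + 1 := by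
  have e0 : c.r (c.P₀ ⊔ (V ⊔ p)) = c.r (V ⊔ p) := by
    have := h0; simp only [lam] at this; linarith
  have e1 : c.r (c.P₀ ⊔ V) = c.r V + 1 := by
    have := h1; simp only [lam] at this; linarith
  have hmono : c.r (c.P₀ ⊔ V) ≤ c.r (c.P₀ ⊔ (V ⊔ p)) :=
    c.mono _ _ (sup_le_sup_left le_sup_left _)
  have hub := c.incr_le_one V hp hp1
  linarith

end Ctx

namespace Ctx
variable (c : Ctx K E)

/-- Parallel lemma (F6): if H is unqualified and H ⊔ a is qualified (a a line),
then a behaves like P₀ over any X ⊇ H. -/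
lemma parallel {H a : Submodule K E} (hH : H ≤ c.P) (ha : a ≤ c.P)
    (ha1 : finrank K a = 1) (hlamH : c.lam H = 1) (hlamS : c.lam (H ⊔ a) = 0) :
    ∀ X : Submodule K E, H ≤ X → c.r (X ⊔ a) = c.r (X ⊔ c.P₀) := by
  intro X hHX
  have hS : c.r (H ⊔ a) = c.r H + 1 := c.trigger ha ha1 hlamH hlamS
  have eS : c.r (c.P₀ ⊔ (H ⊔ a)) = c.r (H ⊔ a) := by
    simp only [lam] at hlamS; linarith
  have eH : c.r (c.P₀ ⊔ H) = c.r H + 1 := by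
    simp only [lam] at hlamH; linarith
  -- (1) r (P₀ ⊔ X ⊔ a) = r (X ⊔ a)
  have h1 : c.r ((X ⊔ a) ⊔ (c.P₀ ⊔ (H ⊔ a))) + c.r ((X ⊔ a) ⊓ (c.P₀ ⊔ (H ⊔ a)))
      ≤ c.r (X ⊔ a) + c.r (c.P₀ ⊔ (H ⊔ a)) := c.submod _ _
  have hj1 : (X ⊔ a) ⊔ (c.P₀ ⊔ (H ⊔ a)) = c.P₀ ⊔ (X ⊔ a) := by
    rw [sup_comm (c.P₀) (H ⊔ a), ← sup_assoc]
    have : (X ⊔ a) ⊔ (H ⊔ a) = X ⊔ a := by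
      rw [sup_eq_left]
      exact sup_le (le_trans hHX le_sup_left) le_sup_right
    rw [this, sup_comm]
  have hm1 : H ⊔ a ≤ (X ⊔ a) ⊓ (c.P₀ ⊔ (H ⊔ a)) :=
    le_inf (sup_le (le_trans hHX le_sup_left) le_sup_right) le_sup_right
  have hm1' := c.mono _ _ hm1
  rw [hj1] at h1
  have e1 : c.r (c.P₀ ⊔ (X ⊔ a)) = c.r (X ⊔ a) := by
    have := c.mono (X ⊔ a) (c.P₀ ⊔ (X ⊔ a)) le_sup_right
    linarith
  -- (2) r (P₀ ⊔ X ⊔ a) = r (P₀ ⊔ X) : increment of a over P₀ ⊔ H is 0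
  have h2 := c.incr_mono (sup_le_sup_left hHX c.P₀) a
  have hxa : (c.P₀ ⊔ H) ⊔ a = c.P₀ ⊔ (H ⊔ a) := by rw [sup_assoc]
  rw [hxa] at h2
  have e2 : c.r ((c.P₀ ⊔ X) ⊔ a) = c.r (c.P₀ ⊔ X) := by
    have hle := c.mono (c.P₀ ⊔ X) ((c.P₀ ⊔ X) ⊔ a) le_sup_left
    linarith
  -- combine
  have hj2 : (c.P₀ ⊔ X) ⊔ a = c.P₀ ⊔ (X ⊔ a) := by rw [sup_assoc]
  rw [hj2] at e2
  rw [sup_comm X c.P₀]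
  linarith

/-- Minimal qualified subspaces. -/
def IsMin (G : Submodule K E) : Prop :=
  G ≤ c.P ∧ c.lam G = 0 ∧ ∀ G' : Submodule K E, G' < G → c.lam G' = 1

lemma isMin_of_conn {p : Submodule K E} (hp : p ≤ c.P) (hp1 : finrank K p = 1) :
    ∃ G, c.IsMin G ∧ p ≤ G := by
  obtain ⟨G, hG1, hG2, hG3, hG4⟩ := c.conn p hp hp1
  refine ⟨G, ⟨hG1, by simp [lam, hG2], fun G' hG' => ?_⟩, hG4⟩
  have hG'P : G' ≤ c.P := le_trans hG'.le hG1
  rcases c.lam01 hG'P with h | h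
  · exact absurd (by simp only [lam] at h; linarith : c.r (c.P₀ ⊔ G') = c.r G') (hG3 G' hG')
  · exact h

/-- every qualified subspace contains a minimal one. -/
lemma exists_min {V : Submodule K E} (hV : V ≤ c.P) (hlam : c.lam V = 0) :
    ∃ G, c.IsMin G ∧ G ≤ V := by
  generalize hn : finrank K V = n
  induction n using Nat.strong_induction_on generalizing V with
  | _ n IH =>
    by_cases h : ∀ G' : Submodule K E, G' < V → c.lam G' = 1
    · exact ⟨V, ⟨hV, hlam, h⟩, le_rfl⟩
    · push_neg at h
      obtain ⟨G', hG'V, hG'⟩ := h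
      have hG'P : G' ≤ c.P := le_trans hG'V.le hV
      have hlam' : c.lam G' = 0 := (c.lam01 hG'P).resolve_right hG'
      have hfin : finrank K G' < n := hn ▸ Submodule.finrank_lt_finrank_of_lt hG'V
      obtain ⟨G, hG, hGV⟩ := IH _ hfin hG'P hlam' rfl
      exact ⟨G, hG, le_trans hGV hG'V.le⟩


end Ctx

/-- being 0 or 1 -/
def unit01 (x : ℚ) : Prop := x = 0 ∨ x = 1

lemma unit01_cases {a b b' v : ℚ} (ha : unit01 a) (hb : unit01 b) (hb' : unit01 b')
    (h : v = a + b - b') (h0 : 0 ≤ v) (h1 : v ≤ 1) : unit01 v := by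
  rcases ha with rfl | rfl <;> rcases hb with rfl | rfl <;> rcases hb' with rfl | rfl <;>
    first
      | (left; linarith)
      | (right; linarith)

lemma unit01_cases4 {a u v' w : ℚ} (ha : unit01 a) (hu : unit01 u) (hv : unit01 v')
    (h : w = a + u - v') (h0 : 0 ≤ w) (h1 : w ≤ 1) : unit01 w :=
  unit01_cases ha hu hv h h0 h1

namespace Ctx
variable (c : Ctx K E)

/-- Ψ: increments of lines over P₀ ⊔ W are 0 or 1. -/
def Psi (W : Submodule K E) : Prop :=
  ∀ b : Submodule K E, b ≤ c.P → finrank K b = 1 →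
    unit01 (c.r ((c.P₀ ⊔ W) ⊔ b) - c.r (c.P₀ ⊔ W))

/-- Φ: increments of lines over W are 0 or 1. -/
def Phi (W : Submodule K E) : Prop :=
  ∀ b : Submodule K E, b ≤ c.P → finrank K b = 1 →
    unit01 (c.r (W ⊔ b) - c.r W)

lemma phi_of_psi {W : Submodule K E} (hW : W ≤ c.P) (hpsi : c.Psi W) : c.Phi W := by
  intro b hb hb1
  by_cases hbW : b ≤ W
  · left; rw [sup_eq_left.mpr hbW]; ring
  · have hWb : W ⊔ b ≤ c.P := sup_le hW hb
    have hψ := hpsi b hb hb1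
    have hlW := c.lam01 hW
    have hlWb := c.lam01 hWb
    have hkey : c.r (W ⊔ b) - c.r W =
        (c.r ((c.P₀ ⊔ W) ⊔ b) - c.r (c.P₀ ⊔ W)) + c.lam W - c.lam (W ⊔ b) := by
      simp only [lam]
      have : c.P₀ ⊔ (W ⊔ b) = (c.P₀ ⊔ W) ⊔ b := by rw [sup_assoc]
      rw [this]; ring
    have h0 : 0 ≤ c.r (W ⊔ b) - c.r W := sub_nonneg.mpr (c.mono W (W ⊔ b) le_sup_left)
    have h1 : c.r (W ⊔ b) - c.r W ≤ 1 := by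
      have := c.incr_le_one W hb hb1; linarith only [this]
    exact unit01_cases hψ hlW hlWb hkey h0 h1

/-- climbing chain: from an unqualified set below a qualified one, find a trigger. -/
lemma chain_trigger : ∀ n : ℕ, ∀ A A' : Submodule K E, A ≤ c.P → A' ≤ c.P → A ≤ A' →
    c.lam A = 1 → c.lam A' = 0 → finrank K A' ≤ finrank K A + n →
    ∃ D g : Submodule K E, A ≤ D ∧ D ≤ c.P ∧ g ≤ c.P ∧ finrank K g = 1 ∧
      c.lam D = 1 ∧ c.lam (D ⊔ g) = 0 := by
  intro n
  induction n with
  | zero =>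
    intro A A' hA hA' hle h1 h0 hn
    exfalso
    have : A = A' := Submodule.eq_of_le_of_finrank_le hle hn
    rw [this, h0] at h1; norm_num at h1
  | succ n IH =>
    intro A A' hA hA' hle h1 h0 hn
    have hne : A ≠ A' := fun h => by rw [h, h0] at h1; norm_num at h1
    obtain ⟨x, hxA', hxA⟩ := SetLike.exists_of_lt (lt_of_le_of_ne hle hne)
    set g₀ : Submodule K E := Submodule.span K {x} with hg₀
    have hg₀P : g₀ ≤ c.P := span_le_iff.mpr (hA' hxA')
    have hg₀1 : finrank K g₀ = 1 := finrank_span_singleton (fun h => hxA (h ▸ A.zero_mem))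
    have hAg₀ : A ⊔ g₀ ≤ A' := sup_le hle (span_le_iff.mpr hxA')
    have hAg₀P : A ⊔ g₀ ≤ c.P := le_trans hAg₀ hA'
    rcases c.lam01 hAg₀P with h | h
    · exact ⟨A, g₀, le_rfl, hA, hg₀P, hg₀1, h1, h⟩
    · have hfin : finrank K ↥(A ⊔ g₀) = finrank K A + 1 := finrank_sup_line hxA
      obtain ⟨D, g, hD1, hD2, hD3, hD4, hD5, hD6⟩ :=
        IH (A ⊔ g₀) A' hAg₀P hA' hAg₀ h h0 (by omega)
      exact ⟨D, g, le_trans le_sup_left hD1, hD2, hD3, hD4, hD5, hD6⟩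

/-- absorption: if no line increases the rank of A, nothing does. -/
lemma absorb : ∀ d : ℕ, ∀ A : Submodule K E, A ≤ c.P →
    (∀ p : Submodule K E, p ≤ c.P → finrank K p = 1 → c.r (A ⊔ p) = c.r A) →
    ∀ Y : Submodule K E, Y ≤ c.P → finrank K ↥(A ⊔ Y) ≤ finrank K A + d →
    c.r (A ⊔ Y) = c.r A := by
  intro d
  induction d with
  | zero =>
    intro A hA hlines Y hY hfin
    have : A ⊔ Y = A := by
      have := Submodule.eq_of_le_of_finrank_le (le_sup_left : A ≤ A ⊔ Y) (by omega)
      exact this.symm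
    rw [this]
  | succ d IH =>
    intro A hA hlines Y hY hfin
    by_cases hYA : Y ≤ A
    · rw [sup_eq_left.mpr hYA]
    · obtain ⟨x, hxY, hxA⟩ := SetLike.not_le_iff_exists.mp hYA
      set p : Submodule K E := Submodule.span K {x} with hp
      have hpP : p ≤ c.P := span_le_iff.mpr (hY hxY)
      have hp1 : finrank K p = 1 := finrank_span_singleton (fun h => hxA (h ▸ A.zero_mem))
      have hAp : c.r (A ⊔ p) = c.r A := hlines p hpP hp1
      have hlines' : ∀ q : Submodule K E, q ≤ c.P → finrank K q = 1 →
          c.r ((A ⊔ p) ⊔ q) = c.r (A ⊔ p) := by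
        intro q hq hq1
        have h1 := c.incr_mono (le_sup_left : A ≤ A ⊔ p) q
        have h2 := hlines q hq hq1
        have h3 := c.mono (A ⊔ p) ((A ⊔ p) ⊔ q) le_sup_left
        linarith only [h1, h2, h3]
      have hsup : (A ⊔ p) ⊔ Y = A ⊔ Y := by
        rw [sup_assoc, sup_eq_right.mpr (span_le_iff.mpr hxY :  p ≤ Y)]
      have hfin2 : finrank K ↥(A ⊔ p) = finrank K A + 1 := finrank_sup_line hxA
      have := IH (A ⊔ p) (sup_le hA hpP) hlines' Y hY (by rw [hsup]; omega)
      rw [hsup] at this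
      rw [this, hAp]

/-- existence of a maximal unqualified subspace over U inside W. -/
lemma exists_max_unqual : ∀ n : ℕ, ∀ U W : Submodule K E, U ≤ W → W ≤ c.P →
    finrank K W ≤ finrank K U + n → c.lam U = 1 →
    ∃ Z, U ≤ Z ∧ Z ≤ W ∧ c.lam Z = 1 ∧ ∀ Y, Z < Y → Y ≤ W → c.lam Y = 0 := by
  intro n
  induction n with
  | zero =>
    intro U W hUW hW hfin hlam
    have hWU : U = W := Submodule.eq_of_le_of_finrank_le hUW (by omega)
    subst hWU
    exact ⟨U, le_rfl, le_rfl, hlam, fun Y hY hYW => absurd hYW (not_le_of_gt hY)⟩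
  | succ n IH =>
    intro U W hUW hW hfin hlam
    by_cases h : ∃ Y : Submodule K E, U < Y ∧ Y ≤ W ∧ c.lam Y = 1
    · obtain ⟨Y, hUY, hYW, hlamY⟩ := h
      have hfinY : finrank K U < finrank K Y := Submodule.finrank_lt_finrank_of_lt hUY
      obtain ⟨Z, hZ1, hZ2, hZ3, hZ4⟩ := IH Y W hYW hW (by omega) hlamY
      exact ⟨Z, le_trans hUY.le hZ1, hZ2, hZ3, hZ4⟩
    · push_neg at h
      refine ⟨U, le_rfl, hUW, hlam, fun Y hY hYW => ?_⟩
      rcases c.lam01 (le_trans hYW hW) with h0 | h1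
      · exact h0
      · exact absurd h1 (h Y hY hYW)

/-- B5.8: every cover of a maximal unqualified `Z` inside `W` is obtained by a line
parallel to `P₀` modulo a subspace of `Z`. -/
lemma cover_parallel {Z W : Submodule K E} (hZW : Z ≤ W) (hW : W ≤ c.P)
    (hlamZ : c.lam Z = 1) (hmax : ∀ Y, Z < Y → Y ≤ W → c.lam Y = 0)
    {x : E} (hxW : x ∈ W) (hxZ : x ∉ Z) :
    ∃ H a : Submodule K E, H ≤ Z ∧ a ≤ c.P ∧ finrank K a = 1 ∧
      Z ⊔ a = Z ⊔ Submodule.span K {x} ∧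
      ∀ X : Submodule K E, H ≤ X → c.r (X ⊔ a) = c.r (X ⊔ c.P₀) := by
  have hxmem : x ∈ Z ⊔ Submodule.span K {x} :=
    Submodule.mem_sup_right (Submodule.mem_span_singleton_self x)
  have hZX₁ : Z < Z ⊔ Submodule.span K {x} :=
    lt_of_le_of_ne le_sup_left (fun h => hxZ (h ▸ hxmem))
  have hX₁W : Z ⊔ Submodule.span K {x} ≤ W := sup_le hZW (span_le_iff.mpr hxW)
  have hlamX₁ : c.lam (Z ⊔ Submodule.span K {x}) = 0 := hmax _ hZX₁ hX₁W
  obtain ⟨G₄, hG₄min, hG₄X₁⟩ := c.exists_min (le_trans hX₁W hW) hlamX₁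
  have hG₄Z : ¬ G₄ ≤ Z := by
    intro h
    have := c.lam_mono h
    rw [hlamZ, hG₄min.2.1] at this
    norm_num at this
  have hHZ : G₄ ⊓ Z ≤ Z := inf_le_right
  have hHG₄ : G₄ ⊓ Z < G₄ := lt_of_le_of_ne inf_le_left (fun h => hG₄Z (h ▸ inf_le_right))
  have hfinX₁ : finrank K ↥(Z ⊔ Submodule.span K {x}) = finrank K Z + 1 :=
    finrank_sup_line hxZ
  have hfinH : finrank K ↥(G₄ ⊓ Z) + 1 = finrank K G₄ := by
    have h1 : finrank K ↥(G₄ ⊓ Z) < finrank K G₄ := Submodule.finrank_lt_finrank_of_lt hHG₄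
    have h2 := modular_bound hG₄X₁ (le_sup_left : Z ≤ Z ⊔ Submodule.span K {x})
    omega
  have hlamH : c.lam (G₄ ⊓ Z) = 1 := hG₄min.2.2 _ hHG₄
  obtain ⟨v, hvG₄, hvH⟩ := SetLike.exists_of_lt hHG₄
  have haG₄ : Submodule.span K {v} ≤ G₄ := span_le_iff.mpr hvG₄
  have haP : Submodule.span K {v} ≤ c.P :=
    le_trans haG₄ (le_trans hG₄X₁ (le_trans hX₁W hW))
  have ha1 : finrank K (Submodule.span K {v}) = 1 :=
    finrank_span_singleton (fun h => hvH (h ▸ (G₄ ⊓ Z).zero_mem))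
  have hHa : (G₄ ⊓ Z) ⊔ Submodule.span K {v} = G₄ := by
    apply Submodule.eq_of_le_of_finrank_le (sup_le hHG₄.le haG₄)
    have h3 : finrank K ↥((G₄ ⊓ Z) ⊔ Submodule.span K {v}) = finrank K ↥(G₄ ⊓ Z) + 1 :=
      finrank_sup_line hvH
    omega
  have hpar : ∀ X : Submodule K E, G₄ ⊓ Z ≤ X →
      c.r (X ⊔ Submodule.span K {v}) = c.r (X ⊔ c.P₀) :=
    c.parallel (le_trans hHZ (le_trans hZW hW)) haP ha1 hlamH
      (by rw [hHa]; exact hG₄min.2.1)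
  have hvZ : v ∉ Z := fun h => hvH ⟨hvG₄, h⟩
  have hZa : Z ⊔ Submodule.span K {v} = Z ⊔ Submodule.span K {x} := by
    apply Submodule.eq_of_le_of_finrank_le (sup_le le_sup_left (le_trans haG₄ hG₄X₁))
    have h4 : finrank K ↥(Z ⊔ Submodule.span K {v}) = finrank K Z + 1 :=
      finrank_sup_line hvZ
    omega
  exact ⟨G₄ ⊓ Z, Submodule.span K {v}, hHZ, haP, ha1, hZa, hpar⟩

/-- B5.9: above a maximal unqualified `Z` inside `W`, the rank is constant `r Z + 1`. -/
lemma interval_rank {Z W : Submodule K E} (hZW : Z ≤ W) (hW : W ≤ c.P)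
    (hlamZ : c.lam Z = 1) (hmax : ∀ Y, Z < Y → Y ≤ W → c.lam Y = 0) :
    ∀ V : Submodule K E, Z < V → V ≤ W → c.r V = c.r Z + 1 := by
  intro V
  generalize hn : finrank K V = n
  induction n using Nat.strong_induction_on generalizing V with
  | _ n IH =>
    intro hZV hVW
    obtain ⟨x, hxV, hxZ⟩ := SetLike.exists_of_lt hZV
    have hfinZV : finrank K Z < finrank K V := Submodule.finrank_lt_finrank_of_lt hZV
    by_cases hcov : finrank K V = finrank K Z + 1
    · -- cover case : trigger
      have hVeq : Z ⊔ Submodule.span K {x} = V := by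
        apply Submodule.eq_of_le_of_finrank_le (sup_le hZV.le (span_le_iff.mpr hxV))
        have : finrank K ↥(Z ⊔ Submodule.span K {x}) = finrank K Z + 1 := finrank_sup_line hxZ
        omega
      have hlamV : c.lam V = 0 := hmax V hZV hVW
      have hxP : Submodule.span K {x} ≤ c.P := span_le_iff.mpr (hW (hVW hxV))
      have hx1 : finrank K (Submodule.span K {x}) = 1 :=
        finrank_span_singleton (fun h => hxZ (h ▸ Z.zero_mem))
      have := c.trigger hxP hx1 hlamZ (hVeq ▸ hlamV)
      rw [hVeq] at this
      exact this
    · -- non-cover case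
      obtain ⟨V', hZV', hV'V, hxV', hfinV'⟩ := exists_hyperplane_avoid hZV.le hxV hxZ
      have hV'lt : Z < V' :=
        lt_of_le_of_ne hZV' (fun h => hcov (by rw [← h] at hfinV'; omega))
      have hV'W : V' ≤ W := le_trans hV'V hVW
      have hIH : c.r V' = c.r Z + 1 := IH (finrank K V') (by omega) V' rfl hV'lt hV'W
      have hlamV' : c.lam V' = 0 := hmax V' hV'lt hV'W
      obtain ⟨H, a, hHZ, haP, ha1, hZa, hpar⟩ :=
        c.cover_parallel hZW hW hlamZ hmax (hVW hxV) hxZ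
      have hVeq : V' ⊔ Submodule.span K {x} = V := by
        apply Submodule.eq_of_le_of_finrank_le (sup_le hV'V (span_le_iff.mpr hxV))
        have : finrank K ↥(V' ⊔ Submodule.span K {x}) = finrank K V' + 1 :=
          finrank_sup_line hxV'
        omega
      have hV'a : V' ⊔ a = V := by
        apply le_antisymm
        · refine sup_le hV'V ?_
          have : a ≤ Z ⊔ Submodule.span K {x} := hZa ▸ le_sup_right
          exact le_trans this (sup_le hZV.le (span_le_iff.mpr hxV))
        · rw [← hVeq]
          refine sup_le le_sup_left ?_
          have hx_mem : Submodule.span K {x} ≤ Z ⊔ a := by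
            rw [hZa]; exact le_sup_right
          exact le_trans hx_mem (sup_le (le_trans hV'lt.le le_sup_left) le_sup_right)
      have := hpar V' (le_trans hHZ hV'lt.le)
      rw [hV'a] at this
      have hlamV'' : c.r (V' ⊔ c.P₀) = c.r V' := by
        have : c.r (c.P₀ ⊔ V') - c.r V' = 0 := hlamV'
        rw [sup_comm]; linarith
      rw [this, hlamV'', hIH]

/-- B5.11+B5.12: diamond descent inside a minimal qualified `G` relative to `Z`. -/
lemma descent {G U Z : Submodule K E} (hGmin : c.IsMin G) (hUG : U ≤ G)
    (hZP : Z ≤ c.P)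
    (hB : ∀ B : Submodule K E, U ≤ B → B ≤ G → finrank K B + 1 = finrank K G →
      c.lam (B ⊔ Z) = 1) :
    ∀ j : ℕ, ∀ V : Submodule K E, U ≤ V → V ≤ G → finrank K V + j = finrank K G →
      c.r (V ⊔ Z) + j ≤ c.r (G ⊔ Z) := by
  have hGP : G ≤ c.P := hGmin.1
  -- B5.11 : for a hyperplane B ⊇ U of G, the rank of G ⊔ Z is r (B ⊔ Z) + 1
  have hB511 : ∀ B : Submodule K E, U ≤ B → B ≤ G → finrank K B + 1 = finrank K G →
      c.r (G ⊔ Z) = c.r (B ⊔ Z) + 1 := by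
    intro B hUB hBG hBfin
    have hBlt : B < G := lt_of_le_of_ne hBG (fun h => by rw [h] at hBfin; omega)
    obtain ⟨y, hyG, hyB⟩ := SetLike.exists_of_lt hBlt
    have hyP : Submodule.span K {y} ≤ c.P := span_le_iff.mpr (hGP hyG)
    have hy1 : finrank K (Submodule.span K {y}) = 1 :=
      finrank_span_singleton (fun h => hyB (h ▸ B.zero_mem))
    have hBy : B ⊔ Submodule.span K {y} = G := by
      apply Submodule.eq_of_le_of_finrank_le (sup_le hBG (span_le_iff.mpr hyG))
      have h3 : finrank K ↥(B ⊔ Submodule.span K {y}) = finrank K B + 1 :=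
        finrank_sup_line hyB
      omega
    have hlamB : c.lam B = 1 := hGmin.2.2 B hBlt
    have hpar := c.parallel (le_trans hBG hGP) hyP hy1 hlamB
      (by rw [hBy]; exact hGmin.2.1) (B ⊔ Z) le_sup_left
    have hj : (B ⊔ Z) ⊔ Submodule.span K {y} = G ⊔ Z := by
      rw [sup_right_comm, hBy]
    rw [hj] at hpar
    have hlamBZ : c.lam (B ⊔ Z) = 1 := hB B hUB hBG hBfin
    have : c.r ((B ⊔ Z) ⊔ c.P₀) = c.r (B ⊔ Z) + 1 := by
      have h5 : c.r (c.P₀ ⊔ (B ⊔ Z)) - c.r (B ⊔ Z) = 1 := hlamBZ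
      rw [sup_comm]; linarith
    rw [this] at hpar
    exact hpar
  intro j
  induction j with
  | zero =>
    intro V hUV hVG hVfin
    have : V = G := Submodule.eq_of_le_of_finrank_le hVG (by omega)
    rw [this]; simp
  | succ j IH =>
    intro V hUV hVG hVfin
    have hVne : V ≠ G := fun h => by rw [h] at hVfin; omega
    obtain ⟨x, hxG, hxV⟩ := SetLike.exists_of_lt (lt_of_le_of_ne hVG hVne)
    have hfinVx : finrank K ↥(V ⊔ Submodule.span K {x}) = finrank K V + 1 :=
      finrank_sup_line hxV
    have hVxG : V ⊔ Submodule.span K {x} ≤ G := sup_le hVG (span_le_iff.mpr hxG)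
    have hIH := IH (V ⊔ Submodule.span K {x}) (le_trans hUV le_sup_left) hVxG (by omega)
    obtain ⟨B, hVB, hBG, hxB, hBfin⟩ := exists_hyperplane_avoid hVG hxG hxV
    have hUB : U ≤ B := le_trans hUV hVB
    have h511 := hB511 B hUB hBG hBfin
    -- submodularity of (V ⊔ span x ⊔ Z) and (B ⊔ Z)
    have hsub := c.submod ((V ⊔ Submodule.span K {x}) ⊔ Z) (B ⊔ Z)
    have hjoin : ((V ⊔ Submodule.span K {x}) ⊔ Z) ⊔ (B ⊔ Z) = G ⊔ Z := by
      have hBx : B ⊔ Submodule.span K {x} = G := by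
        apply Submodule.eq_of_le_of_finrank_le (sup_le hBG (span_le_iff.mpr hxG))
        have h3 : finrank K ↥(B ⊔ Submodule.span K {x}) = finrank K B + 1 :=
          finrank_sup_line hxB
        omega
      apply le_antisymm
      · refine sup_le (sup_le (le_trans hVxG le_sup_left) le_sup_right)
          (sup_le (le_trans hBG le_sup_left) le_sup_right)
      · have hZle : Z ≤ ((V ⊔ Submodule.span K {x}) ⊔ Z) ⊔ (B ⊔ Z) :=
          le_trans (le_sup_right : Z ≤ (V ⊔ Submodule.span K {x}) ⊔ Z) le_sup_left
        refine sup_le ?_ hZle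
        rw [← hBx]
        refine sup_le ?_ ?_
        · exact le_trans (le_sup_left : B ≤ B ⊔ Z) le_sup_right
        · exact le_trans
            (le_sup_right : Submodule.span K {x} ≤ V ⊔ Submodule.span K {x})
            (le_trans le_sup_left le_sup_left)
    have hmeet : V ⊔ Z ≤ ((V ⊔ Submodule.span K {x}) ⊔ Z) ⊓ (B ⊔ Z) :=
      le_inf (sup_le_sup_right le_sup_left Z) (sup_le_sup_right hVB Z)
    have hmeet' := c.mono _ _ hmeet
    rw [hjoin] at hsub
    have : c.r (V ⊔ Z) + 1 ≤ c.r ((V ⊔ Submodule.span K {x}) ⊔ Z) := by linarith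
    have hcast : (j : ℚ) + 1 = ((j + 1 : ℕ) : ℚ) := by push_cast; ring
    linarith

/-- The θ-world is contradictory: a qualified `W` cannot have all outside lines
adding the same fractional rank θ ∈ (0,1). -/
lemma theta_world {W : Submodule K E} (hW : W ≤ c.P) (hlamW : c.lam W = 0)
    {θ : ℚ} (hθ0 : 0 < θ) (hθ1 : θ < 1)
    {b : Submodule K E} (hbP : b ≤ c.P) (hb1 : finrank K b = 1) (hbW : ¬ b ≤ W)
    (habs : ∀ Y : Submodule K E, Y ≤ c.P → ¬ Y ≤ W → c.r (W ⊔ Y) = c.r W + θ) :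
    False := by
  -- B5.4 : kill of k = 1 minimal subspaces
  have hkill : ∀ G : Submodule K E, c.IsMin G → ¬ G ≤ W →
      finrank K ↥(G ⊓ W) + 2 ≤ finrank K G := by
    intro G hGmin hGW
    by_contra hlt
    have hHG : G ⊓ W < G := lt_of_le_of_ne inf_le_left (fun h => hGW (h ▸ inf_le_right))
    have hfin : finrank K ↥(G ⊓ W) + 1 = finrank K G := by
      have := Submodule.finrank_lt_finrank_of_lt hHG
      omega
    have hlamH : c.lam (G ⊓ W) = 1 := hGmin.2.2 _ hHG
    obtain ⟨y, hyG, hyH⟩ := SetLike.exists_of_lt hHG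
    have hyP : Submodule.span K {y} ≤ c.P := span_le_iff.mpr (hGmin.1 hyG)
    have hy1 : finrank K (Submodule.span K {y}) = 1 :=
      finrank_span_singleton (fun h => hyH (h ▸ (G ⊓ W).zero_mem))
    have hHy : (G ⊓ W) ⊔ Submodule.span K {y} = G := by
      apply Submodule.eq_of_le_of_finrank_le (sup_le hHG.le (span_le_iff.mpr hyG))
      have h3 : finrank K ↥((G ⊓ W) ⊔ Submodule.span K {y}) = finrank K ↥(G ⊓ W) + 1 :=
        finrank_sup_line hyH
      omega
    have hpar := c.parallel (le_trans (inf_le_right : G ⊓ W ≤ W) hW) hyP hy1 hlamH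
      (by rw [hHy]; exact hGmin.2.1) W inf_le_right
    have hyW : ¬ Submodule.span K {y} ≤ W := by
      intro h
      exact hyH ⟨hyG, h (Submodule.mem_span_singleton_self y)⟩
    have h1 : c.r (W ⊔ Submodule.span K {y}) = c.r W + θ := habs _ hyP hyW
    have h2 : c.r (W ⊔ c.P₀) = c.r W := by
      have h5 : c.r (c.P₀ ⊔ W) - c.r W = 0 := hlamW
      rw [sup_comm]; linarith only [h5]
    rw [h1, h2] at hpar
    linarith only [hpar, hθ0]
  -- the set of outside codimensions of minimal subspaces
  set Kset : Set ℕ := {k : ℕ | ∃ G : Submodule K E, c.IsMin G ∧ ¬ G ≤ W ∧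
      finrank K G = finrank K ↥(G ⊓ W) + k} with hKset
  have hKne : Kset.Nonempty := by
    obtain ⟨G, hGmin, hbG⟩ := c.isMin_of_conn hbP hb1
    have hGW : ¬ G ≤ W := fun h => hbW (le_trans hbG h)
    have hfinle : finrank K ↥(G ⊓ W) ≤ finrank K G := Submodule.finrank_mono inf_le_left
    exact ⟨finrank K G - finrank K ↥(G ⊓ W), G, hGmin, hGW, by omega⟩
  set ks : ℕ := sInf Kset with hks
  obtain ⟨G, hGmin, hGW, hkeq⟩ : ∃ G : Submodule K E, c.IsMin G ∧ ¬ G ≤ W ∧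
      finrank K G = finrank K ↥(G ⊓ W) + ks := Nat.sInf_mem hKne
  have hks2 : 2 ≤ ks := by
    have := hkill G hGmin hGW
    omega
  -- U and its properties
  have hUW : G ⊓ W ≤ W := inf_le_right
  have hUG : G ⊓ W ≤ G := inf_le_left
  have hUneW : G ⊓ W ≠ W := by
    intro h
    have hWG : W ≤ G := h ▸ inf_le_left
    have hWlt : W < G := lt_of_le_of_ne hWG (fun hh => hGW (hh ▸ le_rfl))
    have := hGmin.2.2 W hWlt
    rw [hlamW] at this; norm_num at this
  have hlamU : c.lam (G ⊓ W) = 1 := by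
    refine hGmin.2.2 _ (lt_of_le_of_ne hUG (fun h => hGW ?_))
    rw [← h]; exact inf_le_right
  -- maximal unqualified Z over U in W
  obtain ⟨Z, hUZ, hZW, hlamZ, hmax⟩ :=
    c.exists_max_unqual (finrank K W) (G ⊓ W) W hUW hW (by omega) hlamU
  have hZP : Z ≤ c.P := le_trans hZW hW
  -- r W = r Z + 1
  have hZltW : Z < W := lt_of_le_of_ne hZW (fun h => by
    rw [h, hlamW] at hlamZ; norm_num at hlamZ)
  have hrW : c.r W = c.r Z + 1 := c.interval_rank hZW hW hlamZ hmax W hZltW le_rfl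
  -- B5.10 : hyperplanes of G over U are unqualified with Z
  have hB : ∀ B : Submodule K E, G ⊓ W ≤ B → B ≤ G →
      finrank K B + 1 = finrank K G → c.lam (B ⊔ Z) = 1 := by
    intro B hUB hBG hBfin
    have hBZP : B ⊔ Z ≤ c.P := sup_le (le_trans hBG hGmin.1) hZP
    rcases c.lam01 hBZP with h0 | h1
    swap
    · exact h1
    exfalso
    obtain ⟨G₂, hG₂min, hG₂BZ⟩ := c.exists_min hBZP h0
    have hBW : B ⊓ W = G ⊓ W := by
      apply le_antisymm
      · exact le_inf (le_trans inf_le_left hBG) inf_le_right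
      · exact le_inf hUB hUW
    have hmeet : (B ⊔ Z) ⊓ W = Z := by
      apply le_antisymm
      · rintro x' ⟨hx'BZ, hx'W⟩
        obtain ⟨bb, hbb, z, hz, hbz⟩ := Submodule.mem_sup.mp hx'BZ
        have hbbW : bb ∈ W := by
          have : bb = x' - z := by rw [← hbz]; abel
          rw [this]
          exact W.sub_mem hx'W (hZW hz)
        have hbbU : bb ∈ G ⊓ W := hBW ▸ (⟨hbb, hbbW⟩ : bb ∈ B ⊓ W)
        have : x' = bb + z := hbz.symm
        rw [this]
        exact Z.add_mem (hUZ hbbU) hz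
      · exact le_inf le_sup_right hZW
    by_cases hG₂W : G₂ ≤ W
    · have hG₂Z : G₂ ≤ Z := by
        rw [← hmeet]; exact le_inf hG₂BZ hG₂W
      have := c.lam_mono hG₂Z
      rw [hlamZ, hG₂min.2.1] at this
      norm_num at this
    · -- k(G₂) ≤ ks - 1 contradiction
      have hk₂ : finrank K ↥(G₂ ⊓ W) + ks ≤ finrank K G₂ := by
        have hfinle : finrank K ↥(G₂ ⊓ W) ≤ finrank K G₂ := Submodule.finrank_mono inf_le_left
        have hmem : (finrank K G₂ - finrank K ↥(G₂ ⊓ W)) ∈ Kset :=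
          ⟨G₂, hG₂min, hG₂W, by omega⟩
        have := Nat.sInf_le hmem
        omega
      have hBZU : B ⊓ Z = G ⊓ W := by
        apply le_antisymm
        · rw [← hBW]
          exact le_inf inf_le_left (le_trans inf_le_right hZW)
        · exact le_inf hUB hUZ
      have h1 : finrank K ↥(G₂ ⊓ Z) ≤ finrank K ↥(G₂ ⊓ W) :=
        Submodule.finrank_mono (le_inf inf_le_left (le_trans inf_le_right hZW))
      have h2 := modular_bound hG₂BZ (le_sup_right : Z ≤ B ⊔ Z)
      have h3 := Submodule.finrank_sup_add_finrank_inf_eq B Z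
      rw [hBZU] at h3
      omega
  -- descent gives the contradiction
  have hdesc := c.descent hGmin hUG hZP hB ks (G ⊓ W) le_rfl hUG (by omega)
  have hUZ' : (G ⊓ W) ⊔ Z = Z := sup_eq_right.mpr hUZ
  rw [hUZ'] at hdesc
  have hGZle : c.r (G ⊔ Z) ≤ c.r (W ⊔ G) := by
    apply c.mono
    exact sup_le le_sup_right (le_trans hZW le_sup_left)
  have hWG : c.r (W ⊔ G) = c.r W + θ := habs G hGmin.1 hGW
  have hcast : (2 : ℚ) ≤ (ks : ℕ) := by exact_mod_cast hks2
  linarith only [hdesc, hGZle, hWG, hrW, hθ1, hcast]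

/-- The inductive step: Ψ(W) holds given Ψ and Φ at all higher dimensions. -/
lemma psi_step {W : Submodule K E} (hW : W ≤ c.P)
    (IH : ∀ W' : Submodule K E, W' ≤ c.P → finrank K W < finrank K W' →
      c.Psi W' ∧ c.Phi W') : c.Psi W := by
  intro b hbP hb1
  by_cases hbW : b ≤ W
  · left
    rw [sup_eq_left.mpr (le_trans hbW (le_sup_right : W ≤ c.P₀ ⊔ W))]
    ring
  -- pairwise linkage
  have link : ∀ b' g : Submodule K E, b' ≤ c.P → finrank K b' = 1 → ¬ b' ≤ W →
      g ≤ c.P → finrank K g = 1 → ¬ g ≤ W →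
      ∃ u v : ℚ, unit01 u ∧ unit01 v ∧
        (c.r ((c.P₀ ⊔ W) ⊔ b') - c.r (c.P₀ ⊔ W)) -
          (c.r ((c.P₀ ⊔ W) ⊔ g) - c.r (c.P₀ ⊔ W)) = u - v := by
    intro b' g hb'P hb'1 hb'W hgP hg1 hgW
    have hWg : W ⊔ g ≤ c.P := sup_le hW hgP
    have hfing : finrank K W < finrank K ↥(W ⊔ g) := by
      rw [finrank_sup_line' hg1 hgW]; omega
    have hu := (IH (W ⊔ g) hWg hfing).1 b' hb'P hb'1
    have hWb' : W ⊔ b' ≤ c.P := sup_le hW hb'P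
    have hfinb' : finrank K W < finrank K ↥(W ⊔ b') := by
      rw [finrank_sup_line' hb'1 hb'W]; omega
    have hv := (IH (W ⊔ b') hWb' hfinb').1 g hgP hg1
    refine ⟨_, _, hu, hv, ?_⟩
    have e1 : c.P₀ ⊔ (W ⊔ g) = (c.P₀ ⊔ W) ⊔ g := (sup_assoc _ _ _).symm
    have e2 : c.P₀ ⊔ (W ⊔ b') = (c.P₀ ⊔ W) ⊔ b' := (sup_assoc _ _ _).symm
    have e3 : ((c.P₀ ⊔ W) ⊔ g) ⊔ b' = ((c.P₀ ⊔ W) ⊔ b') ⊔ g := sup_right_comm _ _ _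
    rw [e1, e2, e3]
    ring
  have hδ0 : ∀ g : Submodule K E, 0 ≤ c.r ((c.P₀ ⊔ W) ⊔ g) - c.r (c.P₀ ⊔ W) :=
    fun g => sub_nonneg.mpr (c.mono _ _ le_sup_left)
  have hδ1 : ∀ g : Submodule K E, g ≤ c.P → finrank K g = 1 →
      c.r ((c.P₀ ⊔ W) ⊔ g) - c.r (c.P₀ ⊔ W) ≤ 1 := by
    intro g hg hg1
    have := c.incr_le_one (c.P₀ ⊔ W) hg hg1
    linarith only [this]
  -- enough to find one line outside W with a 0/1 increment
  suffices hanch : ∃ g : Submodule K E, g ≤ c.P ∧ finrank K g = 1 ∧ ¬ g ≤ W ∧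
      unit01 (c.r ((c.P₀ ⊔ W) ⊔ g) - c.r (c.P₀ ⊔ W)) by
    obtain ⟨g, hgP, hg1, hgW, hug⟩ := hanch
    obtain ⟨u, v, hu, hv, heq⟩ := link b g hbP hb1 hbW hgP hg1 hgW
    exact unit01_cases hug hu hv (by linarith only [heq]) (hδ0 b) (hδ1 b hbP hb1)
  rcases c.lam01 hW with hlamW | hlamW
  · -- W qualified : suppose no anchor, get the θ-world, contradiction
    by_contra hno
    push_neg at hno
    set θ : ℚ := c.r ((c.P₀ ⊔ W) ⊔ b) - c.r (c.P₀ ⊔ W) with hθdef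
    have hθn : ¬ unit01 θ := hno b hbP hb1 hbW
    have hθ0 : 0 < θ :=
      lt_of_le_of_ne (hδ0 b) (fun h => hθn (Or.inl h.symm))
    have hθ1 : θ < 1 :=
      lt_of_le_of_ne (hδ1 b hbP hb1) (fun h => hθn (Or.inr h))
    have hall : ∀ g : Submodule K E, g ≤ c.P → finrank K g = 1 → ¬ g ≤ W →
        c.r ((c.P₀ ⊔ W) ⊔ g) - c.r (c.P₀ ⊔ W) = θ := by
      intro g hgP hg1 hgW
      obtain ⟨u, v, hu, hv, heq⟩ := link b g hbP hb1 hbW hgP hg1 hgW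
      have h0g := hδ0 g
      have h1g := hδ1 g hgP hg1
      rcases hu with rfl | rfl <;> rcases hv with rfl | rfl <;>
        linarith only [heq, h0g, h1g, hθ0, hθ1, hθdef]
    have hinc : ∀ g : Submodule K E, g ≤ c.P → finrank K g = 1 → ¬ g ≤ W →
        c.r (W ⊔ g) = c.r W + θ := by
      intro g hgP hg1 hgW
      have hδg := hall g hgP hg1 hgW
      have hWgP : W ⊔ g ≤ c.P := sup_le hW hgP
      have hiden : c.r ((c.P₀ ⊔ W) ⊔ g) - c.r (c.P₀ ⊔ W) =
          c.lam (W ⊔ g) + (c.r (W ⊔ g) - c.r W) - c.lam W := by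
        simp only [lam]
        have e1 : c.P₀ ⊔ (W ⊔ g) = (c.P₀ ⊔ W) ⊔ g := (sup_assoc _ _ _).symm
        rw [e1]; ring
      have hmono0 : 0 ≤ c.r (W ⊔ g) - c.r W := sub_nonneg.mpr (c.mono _ _ le_sup_left)
      rcases c.lam01 hWgP with h | h
      · rw [hδg, hlamW, h] at hiden; linarith only [hiden]
      · exfalso
        rw [hδg, hlamW, h] at hiden
        linarith only [hiden, hmono0, hθ1]
    have hzero : ∀ g : Submodule K E, g ≤ c.P → finrank K g = 1 → ¬ g ≤ W →
        ∀ p : Submodule K E, p ≤ c.P → finrank K p = 1 →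
        c.r ((W ⊔ g) ⊔ p) = c.r (W ⊔ g) := by
      intro g hgP hg1 hgW p hpP hp1
      by_cases hpWg : p ≤ W ⊔ g
      · rw [sup_eq_left.mpr hpWg]
      · have hpW : ¬ p ≤ W := fun h => hpWg (le_trans h le_sup_left)
        have hWgP : W ⊔ g ≤ c.P := sup_le hW hgP
        have hfing : finrank K W < finrank K ↥(W ⊔ g) := by
          rw [finrank_sup_line' hg1 hgW]; omega
        have hphi := (IH (W ⊔ g) hWgP hfing).2 p hpP hp1
        have hmono0 : 0 ≤ c.r ((W ⊔ g) ⊔ p) - c.r (W ⊔ g) :=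
          sub_nonneg.mpr (c.mono _ _ le_sup_left)
        have hintr := c.incr_mono (le_sup_left : W ≤ W ⊔ g) p
        have hWp : c.r (W ⊔ p) = c.r W + θ := hinc p hpP hp1 hpW
        rcases hphi with h | h
        · linarith only [h]
        · exfalso
          linarith only [h, hintr, hWp, hθ1]
    have habs : ∀ Y : Submodule K E, Y ≤ c.P → ¬ Y ≤ W → c.r (W ⊔ Y) = c.r W + θ := by
      intro Y hYP hYW
      obtain ⟨x, hxY, hxW⟩ := SetLike.not_le_iff_exists.mp hYW
      have hgP : Submodule.span K {x} ≤ c.P := span_le_iff.mpr (hYP hxY)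
      have hg1 : finrank K (Submodule.span K {x}) = 1 :=
        finrank_span_singleton (fun h => hxW (h ▸ W.zero_mem))
      have hgW : ¬ Submodule.span K {x} ≤ W := fun h =>
        hxW (h (Submodule.mem_span_singleton_self x))
      have hA := c.absorb (finrank K ↥((W ⊔ Submodule.span K {x}) ⊔ Y))
        (W ⊔ Submodule.span K {x}) (sup_le hW hgP)
        (hzero _ hgP hg1 hgW) Y hYP (by omega)
      have hsup : (W ⊔ Submodule.span K {x}) ⊔ Y = W ⊔ Y := by
        rw [sup_assoc, sup_eq_right.mpr (span_le_iff.mpr hxY : Submodule.span K {x} ≤ Y)]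
      rw [hsup] at hA
      rw [hA]
      exact hinc _ hgP hg1 hgW
    exact c.theta_world hW hlamW hθ0 hθ1 hbP hb1 hbW habs
  · -- W unqualified : trigger anchor
    obtain ⟨G₀, hG₀min, hbG₀⟩ := c.isMin_of_conn hbP hb1
    have hA'P : W ⊔ G₀ ≤ c.P := sup_le hW hG₀min.1
    have hlamA' : c.lam (W ⊔ G₀) = 0 := by
      have h1 := c.lam_mono (le_sup_right : G₀ ≤ W ⊔ G₀)
      have h2 := c.lam_nonneg (W ⊔ G₀)
      rw [hG₀min.2.1] at h1
      linarith only [h1, h2]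
    obtain ⟨D, g, hWD, hDP, hgP, hg1, hlamD, hlamDg⟩ :=
      c.chain_trigger (finrank K ↥(W ⊔ G₀)) W (W ⊔ G₀) hW hA'P le_sup_left hlamW hlamA'
        (by omega)
    have htr := c.trigger hgP hg1 hlamD hlamDg
    have him := c.incr_mono hWD g
    have hub := c.incr_le_one W hgP hg1
    have hWg : c.r (W ⊔ g) = c.r W + 1 := by linarith only [htr, him, hub]
    have hgW : ¬ g ≤ W := by
      intro h
      rw [sup_eq_left.mpr h] at hWg
      linarith only [hWg]
    refine ⟨g, hgP, hg1, hgW, ?_⟩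
    have hiden : c.r ((c.P₀ ⊔ W) ⊔ g) - c.r (c.P₀ ⊔ W) =
        c.lam (W ⊔ g) + (c.r (W ⊔ g) - c.r W) - c.lam W := by
      simp only [lam]
      have e1 : c.P₀ ⊔ (W ⊔ g) = (c.P₀ ⊔ W) ⊔ g := (sup_assoc _ _ _).symm
      rw [e1]; ring
    rw [hWg, hlamW] at hiden
    rcases c.lam01 (sup_le hW hgP) with h | h <;> rw [h] at hiden
    · left; linarith only [hiden]
    · right; linarith only [hiden]

/-- Main lemma: Ψ and Φ hold for every subspace of P. -/
lemma psi_phi_all : ∀ W : Submodule K E, W ≤ c.P → c.Psi W ∧ c.Phi W := by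
  have key : ∀ n : ℕ, ∀ W : Submodule K E, W ≤ c.P →
      finrank K c.P ≤ finrank K W + n → c.Psi W ∧ c.Phi W := by
    intro n
    induction n using Nat.strong_induction_on with
    | _ n IHn =>
      intro W hW hn
      have IH' : ∀ W' : Submodule K E, W' ≤ c.P → finrank K W < finrank K W' →
          c.Psi W' ∧ c.Phi W' := by
        intro W' hW' hlt
        have h1 : finrank K W' ≤ finrank K c.P := Submodule.finrank_mono hW'
        have hn1 : 1 ≤ n := by omega
        exact IHn (n - 1) (by omega) W' hW' (by omega)
      have hpsi := c.psi_step hW IH'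
      exact ⟨hpsi, c.phi_of_psi hW hpsi⟩
  intro W hW
  exact key (finrank K c.P) W hW (by omega)

/-- Conclusion: the rank of every subspace of P is a natural number. -/
lemma rank_nat : ∀ n : ℕ, ∀ V : Submodule K E, V ≤ c.P → finrank K V = n →
    ∃ k : ℕ, c.r V = k := by
  intro n
  induction n using Nat.strong_induction_on with
  | _ n IHn =>
    intro V hV hfin
    rcases eq_or_ne V ⊥ with rfl | hne
    · exact ⟨0, by rw [c.r_bot]; norm_num⟩
    · obtain ⟨v, hvV, hv0⟩ := Submodule.exists_mem_ne_zero_of_ne_bot hne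
      obtain ⟨B, _, hBV, hvB, hBfin⟩ :=
        exists_hyperplane_avoid (bot_le : (⊥ : Submodule K E) ≤ V) hvV
          (by simp [hv0])
      have hBP : B ≤ c.P := le_trans hBV hV
      have hVeq : B ⊔ Submodule.span K {v} = V := by
        apply Submodule.eq_of_le_of_finrank_le (sup_le hBV (span_le_iff.mpr hvV))
        have h3 : finrank K ↥(B ⊔ Submodule.span K {v}) = finrank K B + 1 :=
          finrank_sup_line hvB
        omega
      have hvP : Submodule.span K {v} ≤ c.P := span_le_iff.mpr (hV hvV)
      have hv1 : finrank K (Submodule.span K {v}) = 1 := finrank_span_singleton hv0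
      have hphi := (c.psi_phi_all B hBP).2 _ hvP hv1
      obtain ⟨k, hk⟩ := IHn (finrank K B) (by omega) B hBP rfl
      rw [hVeq] at hphi
      rcases hphi with h | h
      · exact ⟨k, by linarith only [h, hk]⟩
      · exact ⟨k + 1, by push_cast; linarith only [h, hk]⟩

end Ctx
end QBD

open Module

variable {K E : Type} [Field K] [Fintype K] [AddCommGroup E] [Module K E]
  [FiniteDimensional K E]

/-- q-Brickell–Davenport: if `S_{P₀,P}(M)` is an ideal, perfect and connected
`q`-polymatroid port with `ρ(P₀) = dim P₀ = 1`, then the restriction `M|_P` is a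
`q`-matroid, i.e. `ρ(V)` is a nonnegative integer for every `V ≤ P`. -/
theorem q_brickell_davenport
    (ρ : Submodule K E → ℚ)
    (hbdd : ∀ V : Submodule K E, 0 ≤ ρ V ∧ ρ V ≤ (finrank K V : ℚ))
    (hmono : ∀ V W : Submodule K E, V ≤ W → ρ V ≤ ρ W)
    (hsubmod : ∀ V W : Submodule K E, ρ (V ⊔ W) + ρ (V ⊓ W) ≤ ρ V + ρ W)
    (P₀ P : Submodule K E) (hdisj : P₀ ⊓ P = ⊥) (hspan : P₀ ⊔ P = ⊤)
    (hdimP₀ : finrank K P₀ = 1) (hρP₀ : ρ P₀ = 1)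
    -- perfect
    (hperfect : ∀ V : Submodule K E, V ≤ P →
      ρ (P₀ ⊔ V) = ρ V ∨ ρ (P₀ ⊔ V) = ρ V + 1)
    -- connected
    (hconn : ∀ p : Submodule K E, p ≤ P → finrank K p = 1 →
      ∃ G : Submodule K E, G ≤ P ∧ ρ (P₀ ⊔ G) = ρ G ∧
        (∀ G' : Submodule K E, G' < G → ¬ ρ (P₀ ⊔ G') = ρ G') ∧ p ≤ G)
    -- ideal
    (hideal : ∀ p : Submodule K E, p ≤ P → finrank K p = 1 → ρ p = 1) :
    ∀ V : Submodule K E, V ≤ P → ∃ k : ℕ, ρ V = k := by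
  intro V hV
  exact QBD.Ctx.rank_nat
    ⟨ρ, P₀, P, hbdd, hmono, hsubmod, hdisj, hρP₀, hperfect, hconn, hideal⟩
    (finrank K V) V hV rfl
end
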